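/- Let B be an m×n complex matrix and c a row vector in ℂ^n (a 1×n matrix) with c ≠ 0, and suppose the linear system x·B = c is consistent (has at least one solution). Then the solution set of x·B = c is exactly { c·G | G is an n×m complex matrix with B·G·B = B }, i.e. every row vector of the form c·G with G a {1}-inverse of B solves the system, and every solution arises as c·G for some {1}-inverse G of B. -/

import Mathlib

/-!
Fix one {1}-inverse `G₀` of `B` (it exists over any field). If `c = x₀ B` then `c G B = c` for
every {1}-inverse `G`, so each `c G` solves the system. Conversely, for a solution `x` the row
vector `v = x - c G₀` satisfies `v B = 0`; choosing `u` with `c · u = 1` (possible as `c ≠ 0`),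
the matrix `G₀ + u v` is again a {1}-inverse and `c (G₀ + u v) = c G₀ + v = x`.
-/

open Matrix

theorem LinearMap.exists_comp_comp_eq_self {K V W : Type*} [DivisionRing K]
    [AddCommGroup V] [Module K V] [AddCommGroup W] [Module K W] (f : V →ₗ[K] W) :
    ∃ g : W →ₗ[K] V, f ∘ₗ g ∘ₗ f = f := by
  obtain ⟨h, hh⟩ := f.rangeRestrict.exists_rightInverse_of_surjective f.range_rangeRestrict
  obtain ⟨g, hg⟩ := LinearMap.exists_extend h
  refine ⟨g, LinearMap.ext fun x => ?_⟩
  have hgf : g (f x) = h (f.rangeRestrict x) := LinearMap.congr_fun hg (f.rangeRestrict x)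
  simpa [hgf] using congrArg Subtype.val (LinearMap.congr_fun hh (f.rangeRestrict x))

namespace Matrix

variable {K R m n : Type*} [Fintype m] [Fintype n]

theorem exists_mul_mul_eq_self [Field K] [DecidableEq m] [DecidableEq n] (B : Matrix m n K) :
    ∃ G : Matrix n m K, B * G * B = B := by
  obtain ⟨g, hg⟩ := (toLin' B).exists_comp_comp_eq_self
  refine ⟨LinearMap.toMatrix' g, toLin'.injective ?_⟩
  rw [toLin'_mul, toLin'_mul, toLin'_toMatrix', LinearMap.comp_assoc, hg]

theorem exists_dotProduct_eq_one [DivisionRing K] [DecidableEq n] {c : n → K} (hc : c ≠ 0) :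
    ∃ u : n → K, c ⬝ᵥ u = 1 := by
  obtain ⟨j, hj⟩ := Function.ne_iff.mp hc
  exact ⟨Pi.single j (c j)⁻¹, by rw [dotProduct_single, mul_inv_cancel₀ hj]⟩

theorem vecMul_vecMul_mul_eq_self [Semiring R] {B : Matrix m n R} {G : Matrix n m R}
    (hG : B * G * B = B) (x : m → R) : (x ᵥ* B) ᵥ* G ᵥ* B = x ᵥ* B := by
  rw [vecMul_vecMul, vecMul_vecMul, ← Matrix.mul_assoc, hG]

theorem add_vecMulVec_mul_mul_eq_self [Semiring R] {B : Matrix m n R} {G : Matrix n m R}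
    (hG : B * G * B = B) (u : n → R) {v : m → R} (hv : v ᵥ* B = 0) :
    B * (G + vecMulVec u v) * B = B := by
  rw [Matrix.mul_add, Matrix.add_mul, hG, Matrix.mul_assoc, vecMulVec_mul, hv, vecMulVec_zero,
    Matrix.mul_zero, add_zero]

theorem exists_mul_mul_eq_self_and_eq_vecMul [Field K] [DecidableEq m] [DecidableEq n]
    {B : Matrix m n K} {x : m → K} (hc : x ᵥ* B ≠ 0) :
    ∃ G : Matrix n m K, B * G * B = B ∧ x = (x ᵥ* B) ᵥ* G := by
  obtain ⟨G₀, hG₀⟩ := exists_mul_mul_eq_self B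
  obtain ⟨u, hu⟩ := exists_dotProduct_eq_one hc
  set v := x - (x ᵥ* B) ᵥ* G₀
  have hv : v ᵥ* B = 0 := by rw [sub_vecMul, vecMul_vecMul_mul_eq_self hG₀, sub_self]
  refine ⟨G₀ + vecMulVec u v, add_vecMulVec_mul_mul_eq_self hG₀ u hv, ?_⟩
  rw [vecMul_add, vecMul_vecMulVec, hu, one_smul, add_sub_cancel]

end Matrix

theorem general_solution_by_one_inverses_row {m n : ℕ}
    (B : Matrix (Fin m) (Fin n) ℂ) (c : Fin n → ℂ) (hc : c ≠ 0)
    (hcons : ∃ x : Fin m → ℂ, B.vecMul x = c) :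
    {x : Fin m → ℂ | B.vecMul x = c} =
      {x : Fin m → ℂ | ∃ G : Matrix (Fin n) (Fin m) ℂ,
        B * G * B = B ∧ x = G.vecMul c} := by
  obtain ⟨x₀, rfl⟩ := hcons
  ext x
  constructor
  · rintro (hx : x ᵥ* B = x₀ ᵥ* B)
    rw [← hx] at hc ⊢
    exact exists_mul_mul_eq_self_and_eq_vecMul hc
  · rintro ⟨G, hG, rfl⟩
    exact vecMul_vecMul_mul_eq_self hG x₀
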